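/- Let X be a separable F-space and T : X → X a continuous linear operator. Then T is 𝒜_PS-hypercyclic if and only if T is hypercyclic and for every non-empty open set U ⊆ X there exists y ∈ X such that N(y,U) is piecewise syndetic. Moreover, in that case the set of 𝒜_PS-hypercyclic vectors of T coincides with the set of hypercyclic vectors of T. -/

import Mathlib

open Filter

/-- The lower density `d̲(A) = liminf_n |A ∩ [0,n]| / (n+1)` of a set `A ⊆ ℕ`. -/
noncomputable def lowerDensity (A : Set ℕ) : ℝ :=
  Filter.liminf (fun n : ℕ => ((A ∩ Set.Icc 0 n).ncard : ℝ) / (n + 1)) Filter.atTop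

/-- The upper density `d̄(A) = limsup_n |A ∩ [0,n]| / (n+1)` of a set `A ⊆ ℕ`. -/
noncomputable def upperDensity (A : Set ℕ) : ℝ :=
  Filter.limsup (fun n : ℕ => ((A ∩ Set.Icc 0 n).ncard : ℝ) / (n + 1)) Filter.atTop

/-- The upper Banach density `Bd̄(A) = lim_n limsup_m |A ∩ [m,m+n]| / (n+1)` of `A ⊆ ℕ`
(the limit in `n` exists, so it equals the `limsup` in `n`, which we use). -/
noncomputable def upperBanachDensity (A : Set ℕ) : ℝ :=
  Filter.limsup (fun n : ℕ =>
    Filter.limsup (fun m : ℕ => ((A ∩ Set.Icc m (m + n)).ncard : ℝ) / (n + 1)) Filter.atTop)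
    Filter.atTop

/-- `shiftUnion A b = ∪_{t=0}^b (A - t)` where `A - t = {n : n + t ∈ A}`. -/
def shiftUnion (A : Set ℕ) (b : ℕ) : Set ℕ := {n : ℕ | ∃ t ≤ b, n + t ∈ A}

/-- `A` is `b`-piecewise syndetic: for every `i ≥ 1` some interval `(z, z+i]` with `z ≥ 1`
is contained in `∪_{t=0}^b (A - t)`. -/
def bPiecewiseSyndetic (b : ℕ) (A : Set ℕ) : Prop :=
  ∀ i ≥ 1, ∃ z ≥ 1, Set.Ioc z (z + i) ⊆ shiftUnion A b

/-- `A` is piecewise syndetic if it is `b`-piecewise syndetic for some `b ≥ 1`. -/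
def piecewiseSyndetic (A : Set ℕ) : Prop := ∃ b ≥ 1, bPiecewiseSyndetic b A

/-- `A` is `b`-syndetic: `ℕ = ∪_{t=0}^b (A - t)`. -/
def bSyndetic (b : ℕ) (A : Set ℕ) : Prop := ∀ n : ℕ, ∃ t ≤ b, n + t ∈ A

/-- `A` is syndetic if it is `b`-syndetic for some `b ≥ 1`. -/
def syndetic (A : Set ℕ) : Prop := ∃ b ≥ 1, bSyndetic b A

/-!
If the orbit of `x` is dense and `F ⊆ N(y,U)` is finite, the orbit of `x` meets the open set
`⋂ n ∈ F, T⁻ⁿ U ∋ y` at some time `m`, so `m + F ⊆ N(x,U)`. Each window certifying that `N(y,U)`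
is piecewise syndetic involves only finitely many of its elements, so these translates certify
the same for `N(x,U)`. Conversely a vector with all `N(x,U)` piecewise syndetic, hence non-empty,
is hypercyclic.
-/

lemma piecewiseSyndetic.nonempty {A : Set ℕ} (hA : piecewiseSyndetic A) : A.Nonempty := by
  obtain ⟨b, -, hb⟩ := hA
  obtain ⟨z, -, hsub⟩ := hb 1 le_rfl
  obtain ⟨t, -, ht⟩ := hsub (show z + 1 ∈ Set.Ioc z (z + 1) from ⟨by omega, le_rfl⟩)
  exact ⟨_, ht⟩

lemma bPiecewiseSyndetic.of_forall_finset_translate {b : ℕ} {A B : Set ℕ}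
    (hA : bPiecewiseSyndetic b A)
    (htrans : ∀ F : Finset ℕ, ↑F ⊆ A → ∃ m, ∀ n ∈ F, m + n ∈ B) :
    bPiecewiseSyndetic b B := by
  classical
  intro i hi
  obtain ⟨z, hz, hsub⟩ := hA i hi
  obtain ⟨m, hm⟩ := htrans ((Finset.Ioc z (z + i + b)).filter (· ∈ A))
    (fun n hn => (Finset.mem_filter.mp hn).2)
  refine ⟨z + m, by omega, fun k ⟨hk₁, hk₂⟩ => ?_⟩
  obtain ⟨t, ht, hkt⟩ := hsub (show k - m ∈ Set.Ioc z (z + i) from ⟨by omega, by omega⟩)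
  refine ⟨t, ht, ?_⟩
  have := hm (k - m + t) (Finset.mem_filter.mpr ⟨Finset.mem_Ioc.mpr ⟨by omega, by omega⟩, hkt⟩)
  rwa [show m + (k - m + t) = k + t by omega] at this

lemma piecewiseSyndetic.of_forall_finset_translate {A B : Set ℕ} (hA : piecewiseSyndetic A)
    (htrans : ∀ F : Finset ℕ, ↑F ⊆ A → ∃ m, ∀ n ∈ F, m + n ∈ B) :
    piecewiseSyndetic B :=
  let ⟨b, hb, hbA⟩ := hA
  ⟨b, hb, hbA.of_forall_finset_translate htrans⟩

section Orbits

variable {X : Type*} [TopologicalSpace X] {f : X → X}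

lemma dense_range_iterate_of_forall_piecewiseSyndetic {x : X}
    (hx : ∀ U : Set X, IsOpen U → U.Nonempty → piecewiseSyndetic {n | f^[n] x ∈ U}) :
    Dense (Set.range fun n => f^[n] x) := by
  refine dense_iff_inter_open.mpr fun U hU hUne => ?_
  obtain ⟨n, hn⟩ := (hx U hU hUne).nonempty
  exact ⟨f^[n] x, hn, n, rfl⟩

lemma exists_translate_of_dense_range_iterate (hf : Continuous f) {x y : X}
    (hx : Dense (Set.range fun n => f^[n] x)) {U : Set X} (hU : IsOpen U) (F : Finset ℕ)
    (hF : ↑F ⊆ {n | f^[n] y ∈ U}) :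
    ∃ m, ∀ n ∈ F, m + n ∈ {n | f^[n] x ∈ U} := by
  have hV : IsOpen (⋂ n ∈ F, f^[n] ⁻¹' U) :=
    isOpen_biInter_finset fun n _ => hU.preimage (hf.iterate n)
  obtain ⟨_, ⟨m, rfl⟩, hm⟩ :=
    hx.exists_mem_open hV ⟨y, Set.mem_iInter₂.mpr fun n hn => hF hn⟩
  refine ⟨m, fun n hn => ?_⟩
  have := Set.mem_iInter₂.mp hm n hn
  rwa [Set.mem_preimage, ← Function.iterate_add_apply, add_comm] at this

lemma piecewiseSyndetic_of_dense_range_iterate (hf : Continuous f) {x y : X}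
    (hx : Dense (Set.range fun n => f^[n] x)) {U : Set X} (hU : IsOpen U)
    (hy : piecewiseSyndetic {n | f^[n] y ∈ U}) :
    piecewiseSyndetic {n | f^[n] x ∈ U} :=
  hy.of_forall_finset_translate (exists_translate_of_dense_range_iterate hf hx hU)

end Orbits

theorem stmt_7_general {X : Type*} [AddCommGroup X] [Module ℝ X] [UniformSpace X]
    (T : X →L[ℝ] X) :
    ((∃ x : X, ∀ U : Set X, IsOpen U → U.Nonempty →
        piecewiseSyndetic {n : ℕ | (T ^ n) x ∈ U}) ↔
      ((∃ x : X, Dense (Set.range fun n : ℕ => (T ^ n) x)) ∧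
        ∀ U : Set X, IsOpen U → U.Nonempty →
          ∃ y : X, piecewiseSyndetic {n : ℕ | (T ^ n) y ∈ U})) ∧
    ((∃ x : X, ∀ U : Set X, IsOpen U → U.Nonempty →
        piecewiseSyndetic {n : ℕ | (T ^ n) x ∈ U}) →
      {x : X | ∀ U : Set X, IsOpen U → U.Nonempty →
          piecewiseSyndetic {n : ℕ | (T ^ n) x ∈ U}} =
        {x : X | Dense (Set.range fun n : ℕ => (T ^ n) x)}) := by
  simp only [FunLike.coe_pow_eq_iterate]
  refine ⟨⟨fun ⟨x, hx⟩ => ?_, fun ⟨⟨x, hx⟩, h⟩ => ?_⟩, fun ⟨x₀, hx₀⟩ => ?_⟩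
  · exact ⟨⟨x, dense_range_iterate_of_forall_piecewiseSyndetic hx⟩,
      fun U hU hUne => ⟨x, hx U hU hUne⟩⟩
  · refine ⟨x, fun U hU hUne => ?_⟩
    obtain ⟨y, hy⟩ := h U hU hUne
    exact piecewiseSyndetic_of_dense_range_iterate T.continuous hx hU hy
  · ext x
    exact ⟨dense_range_iterate_of_forall_piecewiseSyndetic, fun hx U hU hUne =>
      piecewiseSyndetic_of_dense_range_iterate T.continuous hx hU (hx₀ U hU hUne)⟩

/-- `T` is `𝒜_PS`-hypercyclic iff `T` is hypercyclic and for every non-empty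
open `U` there is `y` with `N(y,U)` piecewise syndetic; moreover, in that case the
`𝒜_PS`-hypercyclic vectors are exactly the hypercyclic vectors. -/
theorem stmt_7 {X : Type*} [AddCommGroup X] [Module ℝ X] [UniformSpace X] [IsUniformAddGroup X]
    [ContinuousSMul ℝ X] [CompleteSpace X] [TopologicalSpace.SeparableSpace X]
    [TopologicalSpace.MetrizableSpace X]
    (T : X →L[ℝ] X) :
    ((∃ x : X, ∀ U : Set X, IsOpen U → U.Nonempty →
        piecewiseSyndetic {n : ℕ | (T ^ n) x ∈ U}) ↔
      ((∃ x : X, Dense (Set.range fun n : ℕ => (T ^ n) x)) ∧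
        ∀ U : Set X, IsOpen U → U.Nonempty →
          ∃ y : X, piecewiseSyndetic {n : ℕ | (T ^ n) y ∈ U})) ∧
    ((∃ x : X, ∀ U : Set X, IsOpen U → U.Nonempty →
        piecewiseSyndetic {n : ℕ | (T ^ n) x ∈ U}) →
      {x : X | ∀ U : Set X, IsOpen U → U.Nonempty →
          piecewiseSyndetic {n : ℕ | (T ^ n) x ∈ U}} =
        {x : X | Dense (Set.range fun n : ℕ => (T ^ n) x)}) :=
  stmt_7_general T
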